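/- arXiv:1706.08021 — 2 statements merged into one kernel-verified Lean document; each statement's English description precedes it below -/
import Mathlib

section
/- Let C(x) = (1/2)·ln(1+x). For 0 < q ≤ 1, a constant c > 0, and a geometric random variable L with parameter q on {1, 2, …}, we have (1/E[L])·E[Σ_{i=2}^{L} C(q(1−q)^{i−1} c)] ≥ (1−q)·C(q c) + ((1−q)/(2q))·ln(1−q), where the sum is empty (equal to 0) when L = 1. -/
noncomputable def Cnat (x : ℝ) : ℝ := (1 / 2) * Real.log (1 + x)

/-!
Since `(1 + x) (1 - q) ^ j ≤ 1 + x (1 - q) ^ j`, each summand satisfies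
`C(q c (1 - q) ^ j) ≥ C(q c) + (j / 2) ln (1 - q)`. Summing over `j = 1, …, k` bounds the inner sum
by `k C(q c) + (k (k + 1) / 2) (ln (1 - q) / 2)`, and averaging against the geometric weights
`q (1 - q) ^ k` uses only the two moments `E[L - 1] = (1 - q) / q` and
`E[(L - 1) L / 2] = (1 - q) / q ^ 2`. The case `q = 1` is degenerate: both sides vanish.
-/

open Finset Real

lemma Cnat_nonneg {x : ℝ} (hx : 0 ≤ x) : 0 ≤ Cnat x :=
  mul_nonneg (by norm_num) (log_nonneg (by linarith))

lemma Cnat_le_Cnat {x y : ℝ} (hx : -1 < x) (hxy : x ≤ y) : Cnat x ≤ Cnat y := by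
  unfold Cnat
  gcongr
  linarith

lemma Cnat_add_mul_log_le_Cnat_mul_pow {r x : ℝ} (hr0 : 0 < r) (hr1 : r ≤ 1) (hx : -1 < x)
    (j : ℕ) : Cnat x + j * (log r / 2) ≤ Cnat (x * r ^ j) := by
  have hrj : r ^ j ≤ 1 := pow_le_one₀ hr0.le hr1
  have hlog : log ((1 + x) * r ^ j) ≤ log (1 + x * r ^ j) :=
    log_le_log (mul_pos (by linarith) (pow_pos hr0 j)) (by nlinarith)
  rw [log_mul (by linarith) (pow_pos hr0 j).ne', log_pow] at hlog
  unfold Cnat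
  linarith

lemma sum_Icc_two_succ_affine (k : ℕ) (a b : ℝ) :
    ∑ i ∈ Icc 2 (k + 1), (a + ((i - 1 : ℕ) : ℝ) * b) = k * a + k * (k + 1) / 2 * b := by
  induction k with
  | zero => simp
  | succ n ih =>
    rw [sum_Icc_succ_top (by omega), ih]
    push_cast [Nat.add_sub_cancel]
    ring

section InnerSum

variable {r x : ℝ}

lemma sum_Cnat_mul_pow_nonneg (hr : 0 ≤ r) (hx : 0 ≤ x) (k : ℕ) :
    0 ≤ ∑ i ∈ Icc 2 (k + 1), Cnat (x * r ^ (i - 1)) :=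
  sum_nonneg fun i _ ↦ Cnat_nonneg (by positivity)

lemma sum_Cnat_mul_pow_le (hr0 : 0 ≤ r) (hr1 : r ≤ 1) (hx : 0 ≤ x) (k : ℕ) :
    ∑ i ∈ Icc 2 (k + 1), Cnat (x * r ^ (i - 1)) ≤ k * Cnat x := by
  calc ∑ i ∈ Icc 2 (k + 1), Cnat (x * r ^ (i - 1))
      ≤ ∑ _i ∈ Icc 2 (k + 1), Cnat x := sum_le_sum fun i _ ↦
        Cnat_le_Cnat (by have := mul_nonneg hx (pow_nonneg hr0 (i - 1)); linarith)
          (mul_le_of_le_one_right hx (pow_le_one₀ hr0 hr1))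
    _ = k * Cnat x := by simp

lemma le_sum_Cnat_mul_pow (hr0 : 0 < r) (hr1 : r ≤ 1) (hx : -1 < x) (k : ℕ) :
    k * Cnat x + k * (k + 1) / 2 * (log r / 2) ≤ ∑ i ∈ Icc 2 (k + 1), Cnat (x * r ^ (i - 1)) := by
  rw [← sum_Icc_two_succ_affine]
  exact sum_le_sum fun i _ ↦ Cnat_add_mul_log_le_Cnat_mul_pow hr0 hr1 hx (i - 1)

end InnerSum

section GeometricMoments

variable {q : ℝ}

lemma hasSum_geom_weight_mul_nat (hq0 : 0 < q) (hq2 : q < 2) :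
    HasSum (fun k : ℕ ↦ q * (1 - q) ^ k * k) ((1 - q) / q) := by
  have h := hasSum_coe_mul_geometric_of_norm_lt_one (r := 1 - q)
    (by rw [Real.norm_eq_abs, abs_lt]; constructor <;> linarith)
  rw [sub_sub_cancel] at h
  have hval : (1 - q) / q = q * ((1 - q) / q ^ 2) := by field_simp
  rw [hval]
  exact (h.mul_left q).congr_fun fun k ↦ by ring

/-- Uses `k (k + 1) / 2 = (k + 2).choose 2 - (k + 1).choose 1`. -/
lemma hasSum_geom_weight_mul_triangle (hq0 : 0 < q) (hq2 : q < 2) :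
    HasSum (fun k : ℕ ↦ q * (1 - q) ^ k * (k * (k + 1) / 2)) ((1 - q) / q ^ 2) := by
  have hr : ‖1 - q‖ < 1 := by rw [Real.norm_eq_abs, abs_lt]; constructor <;> linarith
  have h := (hasSum_choose_mul_geometric_of_norm_lt_one 2 hr).sub
    (hasSum_choose_mul_geometric_of_norm_lt_one 1 hr)
  simp only [sub_sub_cancel, Nat.choose_one_right] at h
  have hval : (1 - q) / q ^ 2 = q * (1 / q ^ (2 + 1) - 1 / q ^ (1 + 1)) := by field_simp; ring
  rw [hval]
  refine (h.mul_left q).congr_fun fun k ↦ ?_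
  rw [Nat.cast_choose_two]
  push_cast
  ring

end GeometricMoments

theorem geometric_renewal_lower_bound
    (q : ℝ) (hq0 : 0 < q) (hq1 : q ≤ 1) (c : ℝ) (hc : 0 < c) :
    q * ∑' k : ℕ, (q * (1 - q) ^ k) *
        (∑ i ∈ Finset.Icc 2 (k + 1), Cnat (q * (1 - q) ^ (i - 1) * c))
      ≥ (1 - q) * Cnat (q * c) + ((1 - q) / (2 * q)) * Real.log (1 - q) := by
  obtain rfl | hq := hq1.eq_or_lt
  · rw [tsum_eq_single 0 fun k hk ↦ by simp [hk]]
    simp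
  have hr0 : 0 < 1 - q := by linarith
  have hx : 0 < q * c := by positivity
  simp_rw [mul_right_comm q _ c]
  set S : ℕ → ℝ := fun k ↦ ∑ i ∈ Icc 2 (k + 1), Cnat (q * c * (1 - q) ^ (i - 1))
  have hmean := (hasSum_geom_weight_mul_nat hq0 (by linarith)).mul_left (Cnat (q * c))
  have hsecond := (hasSum_geom_weight_mul_triangle hq0 (by linarith)).mul_left (log (1 - q) / 2)
  have hsummable : Summable fun k ↦ q * (1 - q) ^ k * S k := by
    refine hmean.summable.of_nonneg_of_le
      (fun k ↦ mul_nonneg (by positivity) (sum_Cnat_mul_pow_nonneg hr0.le hx.le k)) fun k ↦ ?_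
    calc q * (1 - q) ^ k * S k ≤ q * (1 - q) ^ k * (k * Cnat (q * c)) := by
          gcongr; exact sum_Cnat_mul_pow_le hr0.le (by linarith) hx.le k
      _ = _ := by ring
  have hterm : ∀ k : ℕ, Cnat (q * c) * (q * (1 - q) ^ k * k)
      + log (1 - q) / 2 * (q * (1 - q) ^ k * (k * (k + 1) / 2)) ≤ q * (1 - q) ^ k * S k := by
    intro k
    calc _ = q * (1 - q) ^ k * (k * Cnat (q * c) + k * (k + 1) / 2 * (log (1 - q) / 2)) := by
          ring
      _ ≤ q * (1 - q) ^ k * S k := by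
          gcongr; exact le_sum_Cnat_mul_pow hr0 (by linarith) (by linarith) k
  calc (1 - q) * Cnat (q * c) + ((1 - q) / (2 * q)) * log (1 - q)
      = q * (Cnat (q * c) * ((1 - q) / q) + log (1 - q) / 2 * ((1 - q) / q ^ 2)) := by
        field_simp
    _ ≤ _ := by gcongr; exact hasSum_le hterm (hmean.add hsecond) hsummable.hasSum
end

section
/- Let E be a nonnegative random variable, E_c > 0 with P(E ≤ E_c) > 0, and let W be a random variable independent of E taking values in {0, E_c} with P(W = E_c) = E[E | E ≤ E_c]/E_c. Define Ê = W·1{E ≤ E_c} + E·1{E > E_c}. Then E[Ê] = E[E] and P(Ê ≥ E_c) = E[min(E, E_c)]/E_c. -/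
/-!
Since `W` is independent of `E` and takes only the values `0` and `E_c`,
`E[W·1{E ≤ E_c}] = E_c · P(W = E_c) · P(E ≤ E_c) = E[E·1{E ≤ E_c}]`, so replacing `E` by `W` on
`{E ≤ E_c}` preserves the mean. The same product formula computes the probability of
`{Ê ≥ E_c} = {W = E_c, E ≤ E_c} ∪ {E > E_c}`.
-/

open MeasureTheory

lemma eq_indicator_const_of_forall_eq_zero_or_eq {α β : Type*} [Zero β] {f : α → β} {c : β}
    (h : ∀ x, f x = 0 ∨ f x = c) : f = {x | f x = c}.indicator fun _ => c := by
  funext x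
  rcases h x with hx | hx <;> simp [Set.indicator, hx]

section

variable {Ω : Type*} [MeasurableSpace Ω] {μ : Measure Ω}

lemma ProbabilityTheory.IndepFun.measureReal_inter_preimage_eq_mul {β β' : Type*}
    [MeasurableSpace β] [MeasurableSpace β'] {f : Ω → β} {g : Ω → β'} (h : IndepFun f g μ)
    {s : Set β} {t : Set β'} (hs : MeasurableSet s) (ht : MeasurableSet t) :
    μ.real (f ⁻¹' s ∩ g ⁻¹' t) = μ.real (f ⁻¹' s) * μ.real (g ⁻¹' t) := by
  simp only [measureReal_def, h.measure_inter_preimage_eq_mul s t hs ht, ENNReal.toReal_mul]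

lemma setIntegral_div_measureReal_mul [IsFiniteMeasure μ] (f : Ω → ℝ) (s : Set Ω) :
    (∫ x in s, f x ∂μ) / μ.real s * μ.real s = ∫ x in s, f x ∂μ :=
  div_mul_cancel_of_imp fun hs =>
    setIntegral_measure_zero f ((measureReal_eq_zero_iff (measure_ne_top μ s)).1 hs)

lemma integral_min_const_eq [IsFiniteMeasure μ] {f : Ω → ℝ} (hf : Integrable f μ)
    (hfm : Measurable f) (c : ℝ) :
    ∫ ω, min (f ω) c ∂μ = ∫ ω in {ω | f ω ≤ c}, f ω ∂μ + c * μ.real {ω | f ω ≤ c}ᶜ := by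
  have hA : MeasurableSet {ω | f ω ≤ c} := hfm measurableSet_Iic
  have hmin : Integrable (fun ω => min (f ω) c) μ := hf.inf (integrable_const c)
  rw [← integral_add_compl hA hmin, mul_comm, ← smul_eq_mul, ← setIntegral_const]
  congr 1
  · exact setIntegral_congr_fun hA fun ω hω => min_eq_left hω
  · exact setIntegral_congr_fun hA.compl fun ω (hω : ¬f ω ≤ c) => min_eq_right (not_le.1 hω).le

end

lemma setOf_le_piecewise_eq {Ω : Type*} {W E : Ω → ℝ} {c : ℝ} (hc : 0 < c)
    (hW : ∀ ω, W ω = 0 ∨ W ω = c) :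
    {ω | c ≤ {ω | E ω ≤ c}.piecewise W E ω}
      = {ω | W ω = c} ∩ {ω | E ω ≤ c} ∪ {ω | E ω ≤ c}ᶜ := by
  ext ω
  by_cases hE : E ω ≤ c
  · rcases hW ω with hWω | hWω <;> simp [hE, hWω, hc.ne, hc.not_ge]
  · simp [hE, (not_le.1 hE).le]

theorem modified_process_properties_general
    {Ω : Type*} [MeasurableSpace Ω] (μ : Measure Ω) [IsProbabilityMeasure μ]
    (E W : Ω → ℝ) (hE_meas : Measurable E) (hW_meas : Measurable W)
    (hE_int : Integrable E μ)
    (Ec : ℝ) (hEc : 0 < Ec)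
    (hindep : ProbabilityTheory.IndepFun W E μ)
    (hW_vals : ∀ ω, W ω = 0 ∨ W ω = Ec)
    (hW_prob : (μ {ω | W ω = Ec}).toReal
      = ((∫ ω in {ω | E ω ≤ Ec}, E ω ∂μ) / (μ {ω | E ω ≤ Ec}).toReal) / Ec)
    (Ehat : Ω → ℝ)
    (hEhat : ∀ ω, Ehat ω = if E ω ≤ Ec then W ω else E ω) :
    (∫ ω, Ehat ω ∂μ) = ∫ ω, E ω ∂μ ∧
    (μ {ω | Ehat ω ≥ Ec}).toReal = (∫ ω, min (E ω) Ec ∂μ) / Ec := by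
  set A := {ω | E ω ≤ Ec}
  set B := {ω | W ω = Ec}
  have hA : MeasurableSet A := hE_meas measurableSet_Iic
  have hB : MeasurableSet B := hW_meas (measurableSet_singleton Ec)
  have hW : W = B.indicator fun _ => Ec := eq_indicator_const_of_forall_eq_zero_or_eq hW_vals
  have hEhat_eq : Ehat = A.piecewise W E := funext fun ω => by simp [hEhat, Set.piecewise, A]
  have hBA : Ec * μ.real (B ∩ A) = ∫ ω in A, E ω ∂μ := by
    have hB_prob : μ.real B = (∫ ω in A, E ω ∂μ) / μ.real A / Ec := hW_prob
    have hind : μ.real (B ∩ A) = μ.real B * μ.real A :=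
      hindep.measureReal_inter_preimage_eq_mul (measurableSet_singleton Ec) measurableSet_Iic
    rw [hind, hB_prob, div_mul_eq_mul_div, mul_div_cancel₀ _ hEc.ne',
      setIntegral_div_measureReal_mul]
  have hWA : ∫ ω in A, W ω ∂μ = ∫ ω in A, E ω ∂μ := by
    rw [← hBA, hW, setIntegral_indicator hB, setIntegral_const, Set.inter_comm, smul_eq_mul,
      mul_comm]
  have hW_int : Integrable W μ := by rw [hW]; exact (integrable_const Ec).indicator hB
  have hevent : {ω | Ehat ω ≥ Ec} = B ∩ A ∪ Aᶜ := hEhat_eq ▸ setOf_le_piecewise_eq hEc hW_vals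
  constructor
  · rw [hEhat_eq, integral_piecewise hA hW_int.integrableOn hE_int.integrableOn, hWA,
      integral_add_compl hA hE_int]
  · rw [hevent, ← measureReal_def,
      measureReal_union (disjoint_compl_right.mono_left Set.inter_subset_right) hA.compl,
      integral_min_const_eq hE_int hE_meas, ← hBA, add_div, mul_div_cancel_left₀ _ hEc.ne',
      mul_div_cancel_left₀ _ hEc.ne']

theorem modified_process_properties
    {Ω : Type*} [MeasurableSpace Ω] (μ : Measure Ω) [IsProbabilityMeasure μ]
    (E W : Ω → ℝ) (hE_meas : Measurable E) (hW_meas : Measurable W)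
    (hE_nonneg : ∀ ω, 0 ≤ E ω)
    (hE_int : Integrable E μ) (hW_int : Integrable W μ)
    (Ec : ℝ) (hEc : 0 < Ec)
    (hple : 0 < (μ {ω | E ω ≤ Ec}).toReal)
    (hindep : ProbabilityTheory.IndepFun W E μ)
    (hW_vals : ∀ ω, W ω = 0 ∨ W ω = Ec)
    (hW_prob : (μ {ω | W ω = Ec}).toReal
      = ((∫ ω in {ω | E ω ≤ Ec}, E ω ∂μ) / (μ {ω | E ω ≤ Ec}).toReal) / Ec)
    (Ehat : Ω → ℝ)
    (hEhat : ∀ ω, Ehat ω = if E ω ≤ Ec then W ω else E ω) :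
    (∫ ω, Ehat ω ∂μ) = ∫ ω, E ω ∂μ ∧
    (μ {ω | Ehat ω ≥ Ec}).toReal = (∫ ω, min (E ω) Ec ∂μ) / Ec :=
  modified_process_properties_general μ E W hE_meas hW_meas hE_int Ec hEc hindep hW_vals hW_prob
    Ehat hEhat
end
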